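/- arXiv:2409.06895 — 7 statements merged into one kernel-verified Lean document; each statement's English description precedes it below -/
import Mathlib

section
/- Let K, g, τ ≥ 0 all positive and a > 0 with a ≠ g. Define x(a) = a·g·(1 - exp(K·(a-g))) / (g - a·exp(K·(a-g))). Then the derivative of x with respect to a is g·(g - exp(K·(a-g))·(K·a·(g-a) + g)) / (g - a·exp(K·(a-g)))², and this derivative is strictly positive. -/
/-!
Write `t = K (a - g)` and `E = exp t`. The sign of `a E - g` is that of `a - g`, since
`a E - g E = (a - g) E` and `g E - g = g (E - 1)` both have that sign; so the denominator never
vanishes and the quotient rule applies. The numerator of the derivative equals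
`g (1 + t E - E) + K (a - g)² E`, and `1 + t E - E > 0` is the tangent-line inequality
`exp (-t) > 1 - t`; hence the derivative is positive.
-/

open Real

noncomputable def boundAntibodies (K g a : ℝ) : ℝ :=
  a * g * (1 - exp (K * (a - g))) / (g - a * exp (K * (a - g)))

lemma exp_lt_one_add_mul_exp {t : ℝ} (ht : t ≠ 0) : exp t < 1 + t * exp t := by
  have h := add_one_lt_exp (neg_ne_zero.mpr ht)
  rw [exp_neg, inv_eq_one_div, lt_div_iff₀ (exp_pos t)] at h
  linarith

lemma mul_exp_mul_sub_ne {K g a : ℝ} (hK : 0 ≤ K) (hg : 0 < g) (hne : a ≠ g) :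
    a * exp (K * (a - g)) ≠ g := by
  have hE := exp_pos (K * (a - g))
  rcases hne.lt_or_gt with hlt | hgt
  · have hE1 : exp (K * (a - g)) ≤ 1 :=
      exp_le_one_iff.mpr (mul_nonpos_of_nonneg_of_nonpos hK (by linarith))
    nlinarith [mul_lt_mul_of_pos_right hlt hE]
  · have hE1 : 1 ≤ exp (K * (a - g)) :=
      one_le_exp_iff.mpr (mul_nonneg hK (by linarith))
    nlinarith [mul_lt_mul_of_pos_right hgt hE]

lemma hasDerivAt_boundAntibodies (K g a : ℝ) (hD : g - a * exp (K * (a - g)) ≠ 0) :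
    HasDerivAt (boundAntibodies K g)
      (g * (g - exp (K * (a - g)) * (K * a * (g - a) + g)) /
        (g - a * exp (K * (a - g))) ^ 2) a := by
  have hExp : HasDerivAt (fun x => exp (K * (x - g))) (exp (K * (a - g)) * K) a := by
    simpa using (((hasDerivAt_id a).sub_const g).const_mul K).exp
  have hNum := ((hasDerivAt_id' a).mul_const g).fun_mul ((hasDerivAt_const a 1).fun_sub hExp)
  have hDen := (hasDerivAt_const a g).fun_sub ((hasDerivAt_id' a).fun_mul hExp)
  refine (hNum.fun_div hDen hD).congr_deriv ?_
  rw [div_eq_div_iff (pow_ne_zero 2 hD) (pow_ne_zero 2 hD)]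
  ring

lemma boundAntibodies_deriv_numerator_pos {K g a : ℝ} (hK : 0 < K) (hg : 0 ≤ g) (hne : a ≠ g) :
    0 < g - exp (K * (a - g)) * (K * a * (g - a) + g) := by
  have ht : K * (a - g) ≠ 0 := mul_ne_zero hK.ne' (sub_ne_zero.mpr hne)
  have hTangent := exp_lt_one_add_mul_exp ht
  have hSq : 0 < K * (a - g) ^ 2 * exp (K * (a - g)) :=
    mul_pos (mul_pos hK (pow_two_pos_of_ne_zero (sub_ne_zero.mpr hne))) (exp_pos _)
  have hIdentity : g - exp (K * (a - g)) * (K * a * (g - a) + g) =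
      g * (1 + K * (a - g) * exp (K * (a - g)) - exp (K * (a - g))) +
        K * (a - g) ^ 2 * exp (K * (a - g)) := by ring
  rw [hIdentity]
  linarith [mul_nonneg hg (sub_nonneg.mpr hTangent.le)]

theorem depletion_model_deriv_pos_general
    (K g a : ℝ) (hK : 0 < K) (hg : 0 < g) (hne : a ≠ g) :
    HasDerivAt (fun a : ℝ => a * g * (1 - Real.exp (K * (a - g))) /
        (g - a * Real.exp (K * (a - g))))
      (g * (g - Real.exp (K * (a - g)) * (K * a * (g - a) + g)) /
        (g - a * Real.exp (K * (a - g))) ^ 2) a ∧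
    0 < g * (g - Real.exp (K * (a - g)) * (K * a * (g - a) + g)) /
        (g - a * Real.exp (K * (a - g))) ^ 2 := by
  have hD : g - a * exp (K * (a - g)) ≠ 0 :=
    sub_ne_zero.mpr (mul_exp_mul_sub_ne hK.le hg hne).symm
  have hNum := boundAntibodies_deriv_numerator_pos hK hg.le hne
  exact ⟨hasDerivAt_boundAntibodies K g a hD,
    div_pos (mul_pos hg hNum) (pow_two_pos_of_ne_zero hD)⟩

theorem depletion_model_deriv_pos
    (K g a : ℝ) (hK : 0 < K) (hg : 0 < g) (ha : 0 < a) (hne : a ≠ g) :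
    HasDerivAt (fun a : ℝ => a * g * (1 - Real.exp (K * (a - g))) /
        (g - a * Real.exp (K * (a - g))))
      (g * (g - Real.exp (K * (a - g)) * (K * a * (g - a) + g)) /
        (g - a * Real.exp (K * (a - g))) ^ 2) a ∧
    0 < g * (g - Real.exp (K * (a - g)) * (K * a * (g - a) + g)) /
        (g - a * Real.exp (K * (a - g))) ^ 2 :=
  depletion_model_deriv_pos_general K g a hK hg hne
end

section
/- Let K, g > 0 and a > 0 with a < g. Define the depletion accumulation model x(a) = a·g·(1 - exp(K·(a-g))) / (g - a·exp(K·(a-g))), the Langmuir isotherm x_L(a) = g/(1 + 1/(K·a)), and the depletion-free model x_DF(a) = g·(1 - exp(-K·a)). Then x(a) < x_L(a) < x_DF(a). -/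
/-!
Both inequalities are the strict bound `y + 1 < exp y` for `y ≠ 0` after clearing denominators:
with `y = K (a - g)` for the first one and with `y = K a` for the second one.
-/

open Real

noncomputable section

def depletionAccumulation (K g a : ℝ) : ℝ :=
  a * g * (1 - exp (K * (a - g))) / (g - a * exp (K * (a - g)))

def langmuir (K g a : ℝ) : ℝ := g / (1 + 1 / (K * a))

def depletionFree (K g a : ℝ) : ℝ := g * (1 - exp (-(K * a)))

end

section

variable {K g a : ℝ}

lemma langmuir_eq (hKa : 0 < K * a) : langmuir K g a = g * (K * a) / (K * a + 1) := by
  unfold langmuir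
  generalize K * a = t at hKa ⊢
  field_simp

lemma div_add_one_lt_one_sub_exp_neg {t : ℝ} (ht : 0 < t) : t / (t + 1) < 1 - exp (-t) := by
  have hexp : exp (-t) < (t + 1)⁻¹ := by
    rw [exp_neg]
    exact inv_strictAnti₀ (by positivity) (add_one_lt_exp ht.ne')
  calc t / (t + 1) = 1 - (t + 1)⁻¹ := by field_simp; ring
    _ < 1 - exp (-t) := by linarith

theorem langmuir_lt_depletionFree (hg : 0 < g) (hKa : 0 < K * a) :
    langmuir K g a < depletionFree K g a := by
  rw [langmuir_eq hKa, mul_div_assoc]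
  exact mul_lt_mul_of_pos_left (div_add_one_lt_one_sub_exp_neg hKa) hg

theorem depletionAccumulation_lt_langmuir (hK : 0 < K) (ha : 0 < a) (hlt : a < g) :
    depletionAccumulation K g a < langmuir K g a := by
  have hg : 0 < g := ha.trans hlt
  have hexponent : K * (a - g) < 0 := mul_neg_of_pos_of_neg hK (sub_neg.2 hlt)
  set E := exp (K * (a - g))
  have hE_lt_one : E < 1 := exp_lt_one_iff.2 hexponent
  have hE_gt : K * (a - g) + 1 < E := add_one_lt_exp hexponent.ne
  have hden : 0 < g - a * E := by linarith [mul_lt_of_lt_one_right ha hE_lt_one]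
  rw [depletionAccumulation, langmuir_eq (mul_pos hK ha), div_lt_div_iff₀ hden (by positivity)]
  linear_combination mul_pos (mul_pos ha hg) (sub_pos.2 hE_gt)

end

theorem model_inequalities_lt
    (K g a : ℝ) (hK : 0 < K) (hg : 0 < g) (ha : 0 < a) (hlt : a < g) :
    a * g * (1 - Real.exp (K * (a - g))) / (g - a * Real.exp (K * (a - g))) <
      g / (1 + 1 / (K * a)) ∧
    g / (1 + 1 / (K * a)) < g * (1 - Real.exp (-(K * a))) :=
  ⟨depletionAccumulation_lt_langmuir hK ha hlt, langmuir_lt_depletionFree hg (mul_pos hK ha)⟩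
end

section
/- Let K, g > 0 and a > 0 with a > g. Define x(a) = a·g·(1 - exp(K·(a-g))) / (g - a·exp(K·(a-g))), x_L(a) = g/(1 + 1/(K·a)), x_DF(a) = g·(1 - exp(-K·a)). Then x_L(a) < x(a) < x_DF(a). -/
/-!
Write `E = exp (K (a - g))`. Clearing the (positive) denominators, the lower bound is exactly
`1 + K (a - g) < E`, the tangent-line bound for `exp` at `0`. After multiplying by `exp (-K a)`,
the upper bound becomes `exp (-K g) < (1 - g/a) + (g/a) exp (-K a)`, i.e. strict convexity of
`exp` on the segment `[-K a, 0]` at the point `-K g`.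
-/

open Real

theorem Real.exp_mul_lt_one_sub_add_mul_exp {t x : ℝ} (ht₀ : 0 < t) (ht₁ : t < 1) (hx : x ≠ 0) :
    exp (t * x) < 1 - t + t * exp x := by
  have h := strictConvexOn_exp.2 (Set.mem_univ 0) (Set.mem_univ x) hx.symm (sub_pos.2 ht₁) ht₀
    (sub_add_cancel 1 t)
  simpa only [smul_eq_mul, mul_zero, zero_add, exp_zero, mul_one] using h

section DepletionModel

variable {K g a : ℝ}

theorem depletion_eq_sub_one_div (E : ℝ) :
    a * g * (1 - E) / (g - a * E) = a * g * (E - 1) / (a * E - g) := by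
  rw [← neg_div_neg_eq]
  ring_nf

theorem langmuir_lt_depletion {E : ℝ} (hK : 0 < K) (hg : 0 < g) (ha : 0 < a)
    (hE : K * (a - g) + 1 < E) (hd : 0 < a * E - g) :
    g / (1 + 1 / (K * a)) < a * g * (E - 1) / (a * E - g) := by
  have hKa : 0 < K * a := mul_pos hK ha
  have hlangmuir : g / (1 + 1 / (K * a)) = K * a * g / (K * a + 1) := by
    field_simp
  rw [hlangmuir, div_lt_div_iff₀ (by linarith) hd]
  linear_combination a * g * hE

theorem depletion_lt_depletion_free (hK : 0 < K) (hg : 0 < g) (hgt : g < a)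
    (hd : 0 < a * exp (K * (a - g)) - g) :
    a * g * (exp (K * (a - g)) - 1) / (a * exp (K * (a - g)) - g) <
      g * (1 - exp (-(K * a))) := by
  have ha : 0 < a := hg.trans hgt
  have hchord : exp (g / a * -(K * a)) < 1 - g / a + g / a * exp (-(K * a)) :=
    exp_mul_lt_one_sub_add_mul_exp (by positivity) ((div_lt_one ha).2 hgt)
      (neg_ne_zero.2 (mul_pos hK ha).ne')
  have hsecant : a * exp (-(K * g)) < a - g + g * exp (-(K * a)) := by
    have hga : g / a * -(K * a) = -(K * g) := by field_simp
    rw [hga] at hchord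
    calc a * exp (-(K * g)) < a * (1 - g / a + g / a * exp (-(K * a))) := by gcongr
      _ = a - g + g * exp (-(K * a)) := by field_simp
  have hprod : exp (-(K * a)) * exp (K * (a - g)) = exp (-(K * g)) := by
    rw [← exp_add]; ring_nf
  rw [div_lt_iff₀ hd]
  linear_combination g * hsecant + g * a * hprod

end DepletionModel

theorem model_inequalities_gt
    (K g a : ℝ) (hK : 0 < K) (hg : 0 < g) (ha : 0 < a) (hgt : g < a) :
    g / (1 + 1 / (K * a)) <
      a * g * (1 - Real.exp (K * (a - g))) / (g - a * Real.exp (K * (a - g))) ∧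
    a * g * (1 - Real.exp (K * (a - g))) / (g - a * Real.exp (K * (a - g))) <
      g * (1 - Real.exp (-(K * a))) := by
  have hKag : 0 < K * (a - g) := mul_pos hK (sub_pos.2 hgt)
  have hE : K * (a - g) + 1 < exp (K * (a - g)) := add_one_lt_exp hKag.ne'
  have hd : 0 < a * exp (K * (a - g)) - g := by nlinarith
  rw [depletion_eq_sub_one_div]
  exact ⟨langmuir_lt_depletion hK hg ha hE hd, depletion_lt_depletion_free hK hg hgt hd⟩
end

section
/- Let N ≥ 1, g_i > 0, k_i > 0 for i = 1,…,N, a > 0, and let x : [0, ξ) → ℝ^N be differentiable with x(0) = 0 and x_i'(t) = k_i·(a - Σⱼ x_j(t))·(g_i - x_i(t)) for all i and all t ∈ [0, ξ). Then for every i and every t ∈ [0, ξ), x_i(t) = g_i·(1 - exp(-k_i·∫₀ᵗ (a - Σⱼ x_j(s)) ds)). -/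
/-!
Each coordinate solves a scalar linear equation `y' = c p(t) (g - y)` driven by the free-antibody
concentration `p(t) = a - Σⱼ xⱼ(t)`, which is continuous because the `xⱼ` are differentiable.
For such an equation the integrating factor `exp (c ∫₀ᵗ p)` turns `(g - y) · exp (c ∫₀ᵗ p)` into a
function with zero derivative, hence a constant, equal to `g` since `y(0) = 0`.
-/

open Set

theorem hasDerivWithinAt_integral_Icc {E : Type*} [NormedAddCommGroup E] [NormedSpace ℝ E]
    [CompleteSpace E] {f : ℝ → E} {a b t : ℝ} (hf : ContinuousOn f (Icc a b))
    (ht : t ∈ Icc a b) :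
    HasDerivWithinAt (fun u => ∫ s in a..u, f s) (f t) (Icc a b) t := by
  have : Fact (t ∈ Icc a b) := ⟨ht⟩ -- provides the `FTCFilter` instance for `Icc a b`
  exact intervalIntegral.integral_hasDerivWithinAt_right
    ((hf.mono (Icc_subset_Icc le_rfl ht.2)).intervalIntegrable_of_Icc ht.1)
    (hf.stronglyMeasurableAtFilter_nhdsWithin measurableSet_Icc t) (hf t ht)

theorem sub_eq_mul_exp_neg_integral_of_hasDerivWithinAt {y p : ℝ → ℝ} {a b c g t : ℝ}
    (hp : ContinuousOn p (Icc a b))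
    (hy : ∀ s ∈ Icc a b, HasDerivWithinAt y (c * p s * (g - y s)) (Icc a b) s)
    (ht : t ∈ Icc a b) :
    g - y t = (g - y a) * Real.exp (-c * ∫ s in a..t, p s) := by
  set F : ℝ → ℝ := fun u => ∫ s in a..u, p s
  set h : ℝ → ℝ := fun u => (g - y u) * Real.exp (c * F u)
  have hh_deriv : ∀ s ∈ Icc a b, HasDerivWithinAt h 0 (Icc a b) s := by
    intro s hs
    refine (((hy s hs).const_sub g).mul
      (((hasDerivWithinAt_integral_Icc hp hs).const_mul c).exp)).congr_deriv ?_
    ring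
  have hh_const : h t = h a := by
    have := Convex.norm_image_sub_le_of_norm_hasDerivWithin_le (C := 0) hh_deriv
      (fun _ _ => norm_zero.le) (convex_Icc a b) (left_mem_Icc.2 (ht.1.trans ht.2)) ht
    rwa [zero_mul, norm_le_zero_iff, sub_eq_zero] at this
  have hF : F a = 0 := intervalIntegral.integral_same
  simp only [h, hF, mul_zero, Real.exp_zero, mul_one] at hh_const
  rw [← hh_const, mul_assoc, ← Real.exp_add, neg_mul, add_neg_cancel, Real.exp_zero, mul_one]

theorem multi_epitope_integral_representation_general
    (N : ℕ) (g k : Fin N → ℝ)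
    (a : ℝ) (ξ : ℝ)
    (x : ℝ → Fin N → ℝ) (hx0 : ∀ i, x 0 i = 0)
    (hode : ∀ i, ∀ t ∈ Set.Ico (0 : ℝ) ξ,
      HasDerivWithinAt (fun s => x s i)
        (k i * (a - ∑ j, x t j) * (g i - x t i)) (Set.Ico (0 : ℝ) ξ) t) :
    ∀ i, ∀ t ∈ Set.Ico (0 : ℝ) ξ,
      x t i = g i * (1 - Real.exp (-(k i) * ∫ s in (0 : ℝ)..t, (a - ∑ j, x s j))) := by
  intro i t ht
  have hsub : Icc 0 t ⊆ Ico 0 ξ := Icc_subset_Ico_right ht.2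
  have hfree : ContinuousOn (fun s => a - ∑ j, x s j) (Icc 0 t) :=
    continuousOn_const.sub <| continuousOn_finsetSum _ fun j _ s hs =>
      ((hode j s (hsub hs)).mono hsub).continuousWithinAt
  have hsol := sub_eq_mul_exp_neg_integral_of_hasDerivWithinAt hfree
    (fun s hs => (hode i s (hsub hs)).mono hsub) (right_mem_Icc.2 ht.1)
  rw [hx0, sub_zero] at hsol
  linarith

theorem multi_epitope_integral_representation
    (N : ℕ) (hN : 1 ≤ N) (g k : Fin N → ℝ) (hg : ∀ i, 0 < g i) (hk : ∀ i, 0 < k i)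
    (a : ℝ) (ha : 0 < a) (ξ : ℝ) (hξ : 0 < ξ)
    (x : ℝ → Fin N → ℝ) (hx0 : ∀ i, x 0 i = 0)
    (hode : ∀ i, ∀ t ∈ Set.Ico (0 : ℝ) ξ,
      HasDerivWithinAt (fun s => x s i)
        (k i * (a - ∑ j, x t j) * (g i - x t i)) (Set.Ico (0 : ℝ) ξ) t) :
    ∀ i, ∀ t ∈ Set.Ico (0 : ℝ) ξ,
      x t i = g i * (1 - Real.exp (-(k i) * ∫ s in (0 : ℝ)..t, (a - ∑ j, x s j))) :=
  multi_epitope_integral_representation_general N g k a ξ x hx0 hode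
end

section
/- Let x : [0, ξ) → ℝ^N solve the depletion accumulation IVP x_i'(t) = k_i·(a - Σⱼ x_j(t))·(g_i - x_i(t)), x(0) = 0, with all g_i, k_i, a > 0. If at some time t ∈ [0, ξ) there exists an index i with x_i'(t) = 0, then x_j'(t) = 0 for all indices j. -/
/-!
Put `y = g i - x i`. Then `y' = -k i · (a - ∑ x) · y` is a linear ODE with continuous coefficient,
so by uniqueness of solutions `y` cannot reach `0` at time `t` while starting from `y 0 = g i > 0`.
Hence `x_i'(t) = 0` forces the free antibody concentration `a - ∑ x(t)` to vanish, and this common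
factor kills every other derivative.
-/

open Set

theorem eqOn_zero_of_hasDerivWithinAt_smul_self {E : Type*} [NormedAddCommGroup E]
    [NormedSpace ℝ E] {y : ℝ → E} {c : ℝ → ℝ} {a b : ℝ} (hc : ContinuousOn c (Icc a b))
    (hy : ∀ s ∈ Icc a b, HasDerivWithinAt y (c s • y s) (Icc a b) s) (hb : y b = 0) :
    EqOn y 0 (Icc a b) := by
  obtain ⟨C, hC⟩ := isCompact_Icc.exists_bound_of_continuousOn hc
  have hlip : ∀ s ∈ Ioc a b, LipschitzOnWith C.toNNReal (c s • · : E → E) univ := by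
    intro s hs
    have hcs : ‖c s‖₊ ≤ C.toNNReal := by
      rw [← NNReal.coe_le_coe, coe_nnnorm, Real.coe_toNNReal']
      exact (hC s (Ioc_subset_Icc_self hs)).trans (le_max_left C 0)
    exact ((lipschitzWith_smul (c s)).weaken hcs).lipschitzOnWith
  have hderiv : ∀ s ∈ Ioc a b, HasDerivWithinAt y (c s • y s) (Iic s) s := fun s hs =>
    (hy s (Ioc_subset_Icc_self hs)).mono_of_mem_nhdsWithin
      (Filter.mem_of_superset (Icc_mem_nhdsLE hs.1) (Icc_subset_Icc_right hs.2))
  refine ODE_solution_unique_of_mem_Icc_left hlip (fun s hs => (hy s hs).continuousWithinAt)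
    hderiv (fun _ _ => mem_univ _) continuousOn_const (fun s _ => ?_) (fun _ _ => mem_univ _) hb
  simpa [Pi.zero_def] using hasDerivWithinAt_const s (Iic s) (0 : E)

theorem ne_of_hasDerivWithinAt_mul_sub {u c : ℝ → ℝ} {g a b : ℝ} (hc : ContinuousOn c (Icc a b))
    (hab : a ≤ b) (hu : ∀ s ∈ Icc a b, HasDerivWithinAt u (c s * (g - u s)) (Icc a b) s)
    (ha : u a ≠ g) : u b ≠ g := by
  intro hb
  have hgap : EqOn (fun s => g - u s) 0 (Icc a b) := by
    refine eqOn_zero_of_hasDerivWithinAt_smul_self hc.neg (fun s hs => ?_) (by simp [hb])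
    simpa [neg_mul_eq_mul_neg] using (hu s hs).const_sub g
  exact ha (sub_eq_zero.1 (hgap (left_mem_Icc.2 hab))).symm

theorem multi_epitope_derivs_vanish_simultaneously_general
    (N : ℕ) (g k : Fin N → ℝ) (hg : ∀ i, 0 < g i) (hk : ∀ i, 0 < k i)
    (a : ℝ) (ξ : ℝ)
    (x : ℝ → Fin N → ℝ) (hx0 : ∀ i, x 0 i = 0)
    (hode : ∀ i, ∀ t ∈ Set.Ico (0 : ℝ) ξ,
      HasDerivWithinAt (fun s => x s i)
        (k i * (a - ∑ j, x t j) * (g i - x t i)) (Set.Ico (0 : ℝ) ξ) t)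
    (t : ℝ) (ht : t ∈ Set.Ico (0 : ℝ) ξ)
    (i : Fin N) (hi : k i * (a - ∑ j, x t j) * (g i - x t i) = 0) :
    ∀ j : Fin N, k j * (a - ∑ l, x t l) * (g j - x t j) = 0 := by
  have hsub : Icc 0 t ⊆ Ico 0 ξ := Icc_subset_Ico_right ht.2
  have hode' : ∀ j, ∀ s ∈ Icc 0 t, HasDerivWithinAt (fun s => x s j)
      (k j * (a - ∑ l, x s l) * (g j - x s j)) (Icc 0 t) s := fun j s hs =>
    (hode j s (hsub hs)).mono hsub
  have hfree : ContinuousOn (fun s => k i * (a - ∑ j, x s j)) (Icc 0 t) :=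
    continuousOn_const.mul (continuousOn_const.sub (continuousOn_finsetSum _
      fun j _ s hs => (hode' j s hs).continuousWithinAt))
  have hsat : x t i ≠ g i :=
    ne_of_hasDerivWithinAt_mul_sub hfree ht.1 (hode' i) (by simpa [hx0] using (hg i).ne)
  have hfree_t : a - ∑ j, x t j = 0 := by
    simpa [(hk i).ne', sub_ne_zero.2 hsat.symm] using hi
  simp [hfree_t]

theorem multi_epitope_derivs_vanish_simultaneously
    (N : ℕ) (hN : 1 ≤ N) (g k : Fin N → ℝ) (hg : ∀ i, 0 < g i) (hk : ∀ i, 0 < k i)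
    (a : ℝ) (ha : 0 < a) (ξ : ℝ) (hξ : 0 < ξ)
    (x : ℝ → Fin N → ℝ) (hx0 : ∀ i, x 0 i = 0)
    (hode : ∀ i, ∀ t ∈ Set.Ico (0 : ℝ) ξ,
      HasDerivWithinAt (fun s => x s i)
        (k i * (a - ∑ j, x t j) * (g i - x t i)) (Set.Ico (0 : ℝ) ξ) t)
    (t : ℝ) (ht : t ∈ Set.Ico (0 : ℝ) ξ)
    (i : Fin N) (hi : k i * (a - ∑ j, x t j) * (g i - x t i) = 0) :
    ∀ j : Fin N, k j * (a - ∑ l, x t l) * (g j - x t j) = 0 :=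
  multi_epitope_derivs_vanish_simultaneously_general N g k hg hk a ξ x hx0 hode t ht i hi
end

section
/- Let x : [0, ξ) → ℝ^N be the solution of the depletion accumulation IVP x_i'(t) = k_i·(a - Σⱼ x_j(t))·(g_i - x_i(t)), x(0) = 0, with all g_i, k_i, a > 0. Then x_i'(t) > 0 for all t ∈ [0, ξ) and all i. -/
/-!
Each factor of the right-hand side solves a scalar linear equation `f' = c f` with a continuous
coefficient: `(a - ∑ x)' = -(∑ⱼ kⱼ (gⱼ - xⱼ)) (a - ∑ x)` and `(gᵢ - xᵢ)' = -kᵢ (a - ∑ x) (gᵢ - xᵢ)`.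
By backward uniqueness such a solution that vanishes somewhere vanishes at the initial time, so
each factor, being positive at `t = 0`, never vanishes and stays positive by continuity.
-/

open Set

theorem IsPreconnected.pos_of_ne_zero {α : Type*} [TopologicalSpace α] {s : Set α} {f : α → ℝ}
    {x₀ : α} (hs : IsPreconnected s) (hf : ContinuousOn f s) (hne : ∀ x ∈ s, f x ≠ 0)
    (hx₀ : x₀ ∈ s) (h₀ : 0 < f x₀) : ∀ x ∈ s, 0 < f x := by
  intro x hx
  by_contra! hneg
  obtain ⟨y, hy, hfy⟩ := hs.intermediate_value hx hx₀ hf ⟨hneg, h₀.le⟩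
  exact hne y hy hfy

section LinearODE

variable {f c : ℝ → ℝ} {a b : ℝ}

theorem eqOn_zero_of_linear_ode_of_eq_zero (hc : ContinuousOn c (Ico a b))
    (hf : ∀ t ∈ Ico a b, HasDerivWithinAt f (c t * f t) (Ico a b) t)
    {t₀ : ℝ} (ht₀ : t₀ ∈ Ico a b) (hft₀ : f t₀ = 0) : EqOn f 0 (Icc a t₀) := by
  have hsub : Icc a t₀ ⊆ Ico a b := Icc_subset_Ico_right ht₀.2
  obtain ⟨C, hC⟩ := isCompact_Icc.exists_bound_of_continuousOn (hc.mono hsub)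
  have hlip : ∀ t ∈ Ioc a t₀, LipschitzOnWith C.toNNReal (c t * ·) univ := by
    intro t ht
    refine (LipschitzWith.of_dist_le_mul fun y z => ?_).lipschitzOnWith
    rw [Real.dist_eq, Real.dist_eq, ← mul_sub, abs_mul]
    gcongr
    exact (hC t (Ioc_subset_Icc_self ht)).trans (Real.le_coe_toNNReal C)
  have hf' : ∀ t ∈ Ioc a t₀, HasDerivWithinAt f (c t * f t) (Iic t) t := fun t ht =>
    ((hf t (hsub (Ioc_subset_Icc_self ht))).hasDerivAt
      (Ico_mem_nhds ht.1 (ht.2.trans_lt ht₀.2))).hasDerivWithinAt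
  have hzero : ∀ t ∈ Ioc a t₀, HasDerivWithinAt (0 : ℝ → ℝ) (c t * (0 : ℝ → ℝ) t) (Iic t) t :=
    fun t _ => (hasDerivWithinAt_const t (Iic t) (0 : ℝ)).congr_deriv (mul_zero _).symm
  exact ODE_solution_unique_of_mem_Icc_left hlip
    (fun t ht => (hf t (hsub ht)).continuousWithinAt.mono hsub) hf' (fun _ _ => mem_univ _)
    continuousOn_const hzero (fun _ _ => mem_univ _) hft₀

theorem pos_of_linear_ode (hc : ContinuousOn c (Ico a b))
    (hf : ∀ t ∈ Ico a b, HasDerivWithinAt f (c t * f t) (Ico a b) t) (ha : 0 < f a) :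
    ∀ t ∈ Ico a b, 0 < f t := by
  have hne : ∀ t ∈ Ico a b, f t ≠ 0 := fun t ht hft =>
    ha.ne' (eqOn_zero_of_linear_ode_of_eq_zero hc hf ht hft ⟨le_rfl, ht.1⟩)
  intro t ht
  exact isPreconnected_Ico.pos_of_ne_zero (fun t ht => (hf t ht).continuousWithinAt) hne
    ⟨le_rfl, ht.1.trans_lt ht.2⟩ ha t ht

end LinearODE

theorem multi_epitope_derivs_pos_general
    (N : ℕ) (g k : Fin N → ℝ) (hg : ∀ i, 0 < g i) (hk : ∀ i, 0 < k i)
    (a : ℝ) (ha : 0 < a) (ξ : ℝ)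
    (x : ℝ → Fin N → ℝ) (hx0 : ∀ i, x 0 i = 0)
    (hode : ∀ i, ∀ t ∈ Set.Ico (0 : ℝ) ξ,
      HasDerivWithinAt (fun s => x s i)
        (k i * (a - ∑ j, x t j) * (g i - x t i)) (Set.Ico (0 : ℝ) ξ) t) :
    ∀ i, ∀ t ∈ Set.Ico (0 : ℝ) ξ, 0 < k i * (a - ∑ j, x t j) * (g i - x t i) := by
  have hx : ∀ i, ContinuousOn (fun s => x s i) (Ico 0 ξ) := fun i t ht =>
    (hode i t ht).continuousWithinAt
  have hfree_cont : ContinuousOn (fun s => a - ∑ j, x s j) (Ico 0 ξ) :=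
    continuousOn_const.sub (continuousOn_finsetSum _ fun j _ => hx j)
  have hfree_pos : ∀ t ∈ Ico 0 ξ, 0 < a - ∑ j, x t j := by
    refine pos_of_linear_ode (c := fun s => -∑ j, k j * (g j - x s j))
      (continuousOn_finsetSum _ fun j _ => continuousOn_const.mul
        (continuousOn_const.sub (hx j))).neg (fun t ht => ?_) (by simp [hx0, ha])
    refine ((HasDerivWithinAt.fun_sum fun j _ => hode j t ht).const_sub a).congr_deriv ?_
    rw [neg_mul, Finset.sum_mul]
    exact congrArg _ (Finset.sum_congr rfl fun j _ => by ring)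
  have hgap_pos : ∀ i, ∀ t ∈ Ico 0 ξ, 0 < g i - x t i := fun i =>
    pos_of_linear_ode (c := fun s => -(k i * (a - ∑ j, x s j)))
      (continuousOn_const.mul hfree_cont).neg
      (fun t ht => ((hode i t ht).const_sub (g i)).congr_deriv (by ring)) (by simp [hx0, hg i])
  exact fun i t ht => mul_pos (mul_pos (hk i) (hfree_pos t ht)) (hgap_pos i t ht)

theorem multi_epitope_derivs_pos
    (N : ℕ) (hN : 1 ≤ N) (g k : Fin N → ℝ) (hg : ∀ i, 0 < g i) (hk : ∀ i, 0 < k i)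
    (a : ℝ) (ha : 0 < a) (ξ : ℝ) (hξ : 0 < ξ)
    (x : ℝ → Fin N → ℝ) (hx0 : ∀ i, x 0 i = 0)
    (hode : ∀ i, ∀ t ∈ Set.Ico (0 : ℝ) ξ,
      HasDerivWithinAt (fun s => x s i)
        (k i * (a - ∑ j, x t j) * (g i - x t i)) (Set.Ico (0 : ℝ) ξ) t) :
    ∀ i, ∀ t ∈ Set.Ico (0 : ℝ) ξ, 0 < k i * (a - ∑ j, x t j) * (g i - x t i) :=
  multi_epitope_derivs_pos_general N g k hg hk a ha ξ x hx0 hode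
end

section
/- Let x : [0, ξ) → ℝ^N be the solution of the depletion accumulation IVP x_i'(t) = k_i·(a - Σⱼ x_j(t))·(g_i - x_i(t)), x(0) = 0, with all g_i, k_i, a > 0. Then for all t ∈ [0, ξ) and all i: 0 ≤ x_i(t) < min(a, g_i), and Σⱼ x_j(t) < a. -/
/-!
Both the free capacity `v = a - ∑ⱼ xⱼ` and the gaps `uᵢ = gᵢ - xᵢ` solve scalar linear ODEs,
`v' = -(∑ⱼ kⱼ uⱼ) v` and `uᵢ' = -(kᵢ v) uᵢ`. A solution of `f' = -c f` with `c` continuous is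
`f t₀ · exp (-∫ c)`, so it keeps the sign of its initial value: `v > 0` and `uᵢ > 0`. Since
`kᵢ v ≥ 0`, the factor `exp (-∫ kᵢ v)` is at most `1`, so `uᵢ ≤ gᵢ`, i.e. `xᵢ ≥ 0`; then
`xᵢ ≤ ∑ⱼ xⱼ < a`.
-/

open Set MeasureTheory intervalIntegral

section LinearODE

variable {c f : ℝ → ℝ} {t₀ ξ : ℝ}

lemma hasDerivWithinAt_integral_Ici_of_continuousOn_Ico (hc : ContinuousOn c (Ico t₀ ξ))
    {b : ℝ} (hb : b ∈ Ico t₀ ξ) :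
    HasDerivWithinAt (fun u => ∫ s in t₀..u, c s) (c b) (Ici b) b := by
  have hmem : Ico t₀ ξ ∈ nhdsWithin b (Ioi b) :=
    mem_nhdsWithin.2 ⟨Iio ξ, isOpen_Iio, hb.2, fun u hu => ⟨hb.1.trans hu.2.le, hu.1⟩⟩
  have hint : IntervalIntegrable c volume t₀ b :=
    (hc.mono fun u hu => ⟨hu.1, hu.2.trans_lt hb.2⟩).intervalIntegrable_of_Icc hb.1
  exact integral_hasDerivWithinAt_right hint
    ⟨Ico t₀ ξ, hmem, hc.aestronglyMeasurable measurableSet_Ico⟩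
    ((hc b hb).mono_of_mem_nhdsWithin hmem)

lemma eq_mul_exp_neg_integral_of_hasDerivWithinAt (hc : ContinuousOn c (Ico t₀ ξ))
    (hf : ∀ t ∈ Ico t₀ ξ, HasDerivWithinAt f (-(c t * f t)) (Ico t₀ ξ) t)
    {t : ℝ} (ht : t ∈ Ico t₀ ξ) :
    f t = f t₀ * Real.exp (-∫ s in t₀..t, c s) := by
  set W : ℝ → ℝ := fun u => ∫ s in t₀..u, c s
  have hsub : Icc t₀ t ⊆ Ico t₀ ξ := fun u hu => ⟨hu.1, hu.2.trans_lt ht.2⟩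
  have hderiv : ∀ b ∈ Ico t₀ t, HasDerivWithinAt (fun u => f u * Real.exp (W u)) 0 (Ici b) b := by
    intro b hb
    have hb' : b ∈ Ico t₀ ξ := ⟨hb.1, hb.2.trans ht.2⟩
    have hmem : Ico t₀ ξ ∈ nhdsWithin b (Ici b) :=
      mem_nhdsWithin.2 ⟨Iio ξ, isOpen_Iio, hb'.2, fun u hu => ⟨hb.1.trans hu.2, hu.1⟩⟩
    refine (((hf b hb').mono_of_mem_nhdsWithin hmem).fun_mul
      (hasDerivWithinAt_integral_Ici_of_continuousOn_Ico hc hb').exp).congr_deriv ?_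
    ring
  have hcont : ContinuousOn (fun u => f u * Real.exp (W u)) (Icc t₀ t) := by
    have hint : IntegrableOn c (uIcc t₀ t) volume := by
      simpa only [uIcc_of_le ht.1] using (hc.mono hsub).integrableOn_Icc
    have hW : ContinuousOn W (Icc t₀ t) := by
      simpa only [uIcc_of_le ht.1] using continuousOn_primitive_interval hint
    have hfc : ContinuousOn f (Icc t₀ t) :=
      fun u hu => ((hf u (hsub hu)).continuousWithinAt).mono hsub
    exact hfc.mul hW.rexp
  have hconst := constant_of_has_deriv_right_zero hcont hderiv t (right_mem_Icc.2 ht.1)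
  simp only [W, integral_same, Real.exp_zero, mul_one] at hconst
  rw [Real.exp_neg, ← hconst, mul_inv_cancel_right₀ (Real.exp_ne_zero _)]

lemma pos_of_hasDerivWithinAt_neg_mul (hc : ContinuousOn c (Ico t₀ ξ))
    (hf : ∀ t ∈ Ico t₀ ξ, HasDerivWithinAt f (-(c t * f t)) (Ico t₀ ξ) t) (hf₀ : 0 < f t₀)
    {t : ℝ} (ht : t ∈ Ico t₀ ξ) : 0 < f t := by
  rw [eq_mul_exp_neg_integral_of_hasDerivWithinAt hc hf ht]
  positivity

lemma le_of_hasDerivWithinAt_neg_mul (hc : ContinuousOn c (Ico t₀ ξ))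
    (hc₀ : ∀ t ∈ Ico t₀ ξ, 0 ≤ c t)
    (hf : ∀ t ∈ Ico t₀ ξ, HasDerivWithinAt f (-(c t * f t)) (Ico t₀ ξ) t) (hf₀ : 0 ≤ f t₀)
    {t : ℝ} (ht : t ∈ Ico t₀ ξ) : f t ≤ f t₀ := by
  have hint : 0 ≤ ∫ s in t₀..t, c s :=
    integral_nonneg ht.1 fun u hu => hc₀ u ⟨hu.1, hu.2.trans_lt ht.2⟩
  rw [eq_mul_exp_neg_integral_of_hasDerivWithinAt hc hf ht]
  exact mul_le_of_le_one_right hf₀ (Real.exp_le_one_iff.2 (neg_nonpos.2 hint))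

end LinearODE

section Depletion

variable {N : ℕ} {g k : Fin N → ℝ} {a : ℝ} {x : ℝ → Fin N → ℝ} {s : Set ℝ} {t : ℝ}

lemma hasDerivWithinAt_free_capacity
    (hode : ∀ i, HasDerivWithinAt (fun u => x u i)
      (k i * (a - ∑ j, x t j) * (g i - x t i)) s t) :
    HasDerivWithinAt (fun u => a - ∑ j, x u j)
      (-((∑ j, k j * (g j - x t j)) * (a - ∑ j, x t j))) s t := by
  refine ((hasDerivWithinAt_const t s a).fun_sub
    (HasDerivWithinAt.fun_sum fun j _ => hode j)).congr_deriv ?_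
  rw [zero_sub, neg_inj, Finset.sum_mul]
  exact Finset.sum_congr rfl fun j _ => by ring

lemma hasDerivWithinAt_gap {i : Fin N}
    (hode : HasDerivWithinAt (fun u => x u i) (k i * (a - ∑ j, x t j) * (g i - x t i)) s t) :
    HasDerivWithinAt (fun u => g i - x u i) (-((k i * (a - ∑ j, x t j)) * (g i - x t i))) s t :=
  ((hasDerivWithinAt_const t s (g i)).fun_sub hode).congr_deriv (by ring)

end Depletion

theorem multi_epitope_solution_bounds_general
    (N : ℕ) (g k : Fin N → ℝ) (hg : ∀ i, 0 < g i) (hk : ∀ i, 0 < k i)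
    (a : ℝ) (ha : 0 < a) (ξ : ℝ)
    (x : ℝ → Fin N → ℝ) (hx0 : ∀ i, x 0 i = 0)
    (hode : ∀ i, ∀ t ∈ Set.Ico (0 : ℝ) ξ,
      HasDerivWithinAt (fun s => x s i)
        (k i * (a - ∑ j, x t j) * (g i - x t i)) (Set.Ico (0 : ℝ) ξ) t) :
    ∀ t ∈ Set.Ico (0 : ℝ) ξ,
      (∀ i, 0 ≤ x t i ∧ x t i < min a (g i)) ∧ (∑ j, x t j) < a := by
  intro t ht
  have hx : ∀ i, ContinuousOn (fun u => x u i) (Ico 0 ξ) :=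
    fun i u hu => (hode i u hu).continuousWithinAt
  have hfree : ∀ u ∈ Ico (0 : ℝ) ξ, 0 < a - ∑ j, x u j :=
    fun u => pos_of_hasDerivWithinAt_neg_mul (by fun_prop)
      (fun u hu => hasDerivWithinAt_free_capacity fun i => hode i u hu) (by simpa [hx0] using ha)
  have hcoeff : ∀ i, ContinuousOn (fun u => k i * (a - ∑ j, x u j)) (Ico 0 ξ) :=
    fun i => by fun_prop
  have hgap_pos : ∀ i, 0 < g i - x t i := fun i =>
    pos_of_hasDerivWithinAt_neg_mul (hcoeff i) (fun u hu => hasDerivWithinAt_gap (hode i u hu))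
      (by simpa [hx0] using hg i) ht
  have hgap_le : ∀ i, g i - x t i ≤ g i - x 0 i := fun i =>
    le_of_hasDerivWithinAt_neg_mul (hcoeff i) (fun u hu => mul_nonneg (hk i).le (hfree u hu).le)
      (fun u hu => hasDerivWithinAt_gap (hode i u hu)) (by simp [hx0, (hg i).le]) ht
  have hxnn : ∀ i, 0 ≤ x t i := fun i => by linarith [hgap_le i, hx0 i]
  have hsum : ∑ j, x t j < a := by linarith [hfree t ht]
  refine ⟨fun i => ⟨hxnn i, lt_min ?_ (by linarith [hgap_pos i])⟩, hsum⟩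
  exact (Finset.single_le_sum (fun j _ => hxnn j) (Finset.mem_univ i)).trans_lt hsum

theorem multi_epitope_solution_bounds
    (N : ℕ) (hN : 1 ≤ N) (g k : Fin N → ℝ) (hg : ∀ i, 0 < g i) (hk : ∀ i, 0 < k i)
    (a : ℝ) (ha : 0 < a) (ξ : ℝ) (hξ : 0 < ξ)
    (x : ℝ → Fin N → ℝ) (hx0 : ∀ i, x 0 i = 0)
    (hode : ∀ i, ∀ t ∈ Set.Ico (0 : ℝ) ξ,
      HasDerivWithinAt (fun s => x s i)
        (k i * (a - ∑ j, x t j) * (g i - x t i)) (Set.Ico (0 : ℝ) ξ) t) :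
    ∀ t ∈ Set.Ico (0 : ℝ) ξ,
      (∀ i, 0 ≤ x t i ∧ x t i < min a (g i)) ∧ (∑ j, x t j) < a :=
  multi_epitope_solution_bounds_general N g k hg hk a ha ξ x hx0 hode
end
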